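/- Every D-critical lattice for the open unit disc D is a rotation of the hexagonal lattice: if Λ is a lattice with Λ ∩ D = {0} and covolume √3/2, then Λ = k·(ℤ·(1,0) + ℤ·(1/2,√3/2)) for some k ∈ SO(2). -/

import Mathlib

open MeasureTheory

noncomputable section

/-- The lattice `g ℤ²` in `ℝ²`. -/
def lattice2 (g : Matrix (Fin 2) (Fin 2) ℝ) : Set (Fin 2 → ℝ) :=
  {x | ∃ m : Fin 2 → ℤ, x = g.mulVec (fun i => (m i : ℝ))}

/-- `K`-admissibility: the lattice meets `K` only at the origin. -/
def Admissible2 (K : Set (Fin 2 → ℝ)) (g : Matrix (Fin 2) (Fin 2) ℝ) : Prop :=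
  lattice2 g ∩ K = {0}

/-- The critical determinant `Δ(K)`. -/
def critDet2 (K : Set (Fin 2 → ℝ)) : ℝ :=
  sInf {d | ∃ g : Matrix (Fin 2) (Fin 2) ℝ, g.det ≠ 0 ∧ Admissible2 K g ∧ d = |g.det|}

/-- The critical locus `𝓛(K)`: the set of `K`-admissible lattices of covolume `Δ(K)`. -/
def critLocus2 (K : Set (Fin 2 → ℝ)) : Set (Set (Fin 2 → ℝ)) :=
  {L | ∃ g : Matrix (Fin 2) (Fin 2) ℝ, g.det ≠ 0 ∧ L = lattice2 g ∧ Admissible2 K g ∧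
    |g.det| = critDet2 K}

/-- The open unit disc in `ℝ²`. -/
def unitDisc : Set (Fin 2 → ℝ) := {x | x 0 ^ 2 + x 1 ^ 2 < 1}

/-- The open unit square `(-1,1)²`. -/
def openSquare : Set (Fin 2 → ℝ) := {x | |x 0| < 1 ∧ |x 1| < 1}

/-- A matrix generating the hexagonal lattice `ℤ·(1,0) + ℤ·(1/2,√3/2)`. -/
def hexMat : Matrix (Fin 2) (Fin 2) ℝ := !![1, 1/2; 0, Real.sqrt 3 / 2]

/-!
Pick a basis `u, v` of the lattice, positively oriented, that minimises `|u|² + |v|²` among all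
bases related to it by `SL(2, ℤ)`; a minimum exists because only finitely many integer matrices
keep this quantity below a given bound. Comparing with the bases `u, v ± u` and `u ± v, v` gives
`2|⟨u, v⟩| ≤ |u|², |v|²`, admissibility gives `|u|², |v|² ≥ 1`, and the covolume gives
`|u|²|v|² - ⟨u, v⟩² = 3/4`. Since `4⟨u, v⟩² ≤ |u|²|v|²`, this forces `|u|²|v|² ≤ 1`,
hence `|u| = |v| = 1` and `⟨u, v⟩ = ±1/2`. After replacing `v` by `u + v` if necessary, the basis has
the Gram matrix and the determinant of the hexagonal basis, so the two differ by a rotation.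
-/

open Matrix Filter

section Reduction

variable {n : Type*} [Fintype n]

def gramTrace (N : Matrix n n ℝ) : ℝ := (Nᵀ * N).trace

lemma transpose_mul_self_apply_le_gramTrace (N : Matrix n n ℝ) (j : n) :
    (Nᵀ * N) j j ≤ gramTrace N :=
  Finset.single_le_sum (f := fun j => (Nᵀ * N) j j)
    (fun k _ => Finset.sum_nonneg fun i _ => mul_self_nonneg (N i k)) (Finset.mem_univ j)

lemma sq_mul_apply_le (X Y : Matrix n n ℝ) (i j : n) :
    (X * Y) i j ^ 2 ≤ (X * Xᵀ) i i * (Yᵀ * Y) j j := by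
  simpa [mul_apply, sq] using Finset.sum_mul_sq_le_sq_mul_sq Finset.univ (X i ·) (Y · j)

variable [DecidableEq n]

def IsReducedBasis (N : Matrix n n ℝ) : Prop :=
  ∀ E : Matrix n n ℤ, E.det = 1 → gramTrace N ≤ gramTrace (N * E.map (Int.castRingHom ℝ))

lemma finite_setOf_gramTrace_mul_le (M : Matrix n n ℝ) (hM : IsUnit M.det) (C : ℝ) :
    {A : Matrix n n ℤ | gramTrace (M * A.map (Int.castRingHom ℝ)) ≤ C}.Finite := by
  set K := gramTrace M⁻¹ᵀ * C
  refine (Set.finite_Icc (fun _ _ => -⌈K⌉ : n → n → ℤ) (fun _ _ => ⌈K⌉)).subset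
    fun (A : Matrix n n ℤ) hA => ?_
  have hsq (i j : n) : (A i j : ℝ) ^ 2 ≤ K := by
    have h := sq_mul_apply_le M⁻¹ (M * A.map (Int.castRingHom ℝ)) i j
    rw [← Matrix.mul_assoc, M.nonsing_inv_mul hM, Matrix.one_mul] at h
    have hdiag := transpose_mul_self_apply_le_gramTrace M⁻¹ᵀ i
    rw [transpose_transpose] at hdiag
    simp only [map_apply, eq_intCast] at h
    refine h.trans (mul_le_mul hdiag (hA.trans' (transpose_mul_self_apply_le_gramTrace _ j))
      (Finset.sum_nonneg fun k _ => mul_self_nonneg _) ?_)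
    exact (Finset.sum_nonneg fun k _ => mul_self_nonneg _).trans hdiag
  have habs (i j : n) : |A i j| ≤ ⌈K⌉ := by
    refine Int.le_ceil_iff.2 (lt_of_lt_of_le ?_ (hsq i j))
    exact_mod_cast (sub_one_lt _).trans_le
      (Int.abs_eq_natAbs (A i j) ▸ Int.natAbs_le_self_sq (A i j))
  exact ⟨fun i j => (abs_le.1 (habs i j)).1, fun i j => (abs_le.1 (habs i j)).2⟩

lemma exists_isReducedBasis (M : Matrix n n ℝ) (hM : IsUnit M.det) :
    ∃ W : Matrix n n ℤ, W.det = 1 ∧ IsReducedBasis (M * W.map (Int.castRingHom ℝ)) := by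
  have hf : Tendsto (fun W : Matrix n n ℤ => gramTrace (M * W.map (Int.castRingHom ℝ)))
      cofinite atTop := tendsto_atTop.2 fun C => eventually_cofinite.2 <|
    (finite_setOf_gramTrace_mul_le M hM C).subset fun W hW => (not_le.1 hW).le
  obtain ⟨W, hW, hmin⟩ := hf.exists_within_forall_le (s := {W | W.det = 1}) ⟨1, det_one⟩
  refine ⟨W, hW, fun E hE => ?_⟩
  have h := hmin (W * E) (by simp_all)
  rwa [Matrix.map_mul, ← Matrix.mul_assoc] at h

lemma exists_specialOrthogonal_mul_eq {M B : Matrix n n ℝ} (hB : IsUnit B.det)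
    (hgram : Mᵀ * M = Bᵀ * B) (hdet : M.det = B.det) :
    ∃ k : Matrix n n ℝ, kᵀ * k = 1 ∧ k.det = 1 ∧ M = k * B := by
  refine ⟨M * B⁻¹, ?_, ?_, by rw [Matrix.mul_assoc, B.nonsing_inv_mul hB, Matrix.mul_one]⟩
  · calc (M * B⁻¹)ᵀ * (M * B⁻¹) = (B * B⁻¹)ᵀ * (B * B⁻¹) := by
          simp only [transpose_mul, Matrix.mul_assoc, ← Matrix.mul_assoc Mᵀ, hgram]
      _ = 1 := by rw [B.mul_nonsing_inv hB, transpose_one, Matrix.mul_one]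
  · rw [det_mul, det_nonsing_inv, hdet, Ring.mul_inverse_cancel _ hB]

lemma det_map_intCast (W : Matrix n n ℤ) : (W.map (Int.castRingHom ℝ)).det = W.det :=
  (RingHom.map_det _ W).symm

end Reduction

lemma lattice2_mul_intCast_subset (g : Matrix (Fin 2) (Fin 2) ℝ)
    (W : Matrix (Fin 2) (Fin 2) ℤ) :
    lattice2 (g * W.map (Int.castRingHom ℝ)) ⊆ lattice2 g := by
  rintro _ ⟨m, rfl⟩
  refine ⟨W *ᵥ m, ?_⟩
  rw [← Matrix.mulVec_mulVec]
  congr 1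
  ext i
  exact (RingHom.map_mulVec _ W m i).symm

lemma lattice2_mul_intCast (g : Matrix (Fin 2) (Fin 2) ℝ) {W : Matrix (Fin 2) (Fin 2) ℤ}
    (hW : IsUnit W.det) : lattice2 (g * W.map (Int.castRingHom ℝ)) = lattice2 g := by
  refine (lattice2_mul_intCast_subset g W).antisymm ?_
  calc lattice2 g
      = lattice2 (g * W.map (Int.castRingHom ℝ) * W⁻¹.map (Int.castRingHom ℝ)) := by
        rw [Matrix.mul_assoc, ← Matrix.map_mul, W.mul_nonsing_inv hW,
          Matrix.map_one _ (map_zero _) (map_one _), Matrix.mul_one]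
    _ ⊆ lattice2 (g * W.map (Int.castRingHom ℝ)) := lattice2_mul_intCast_subset _ _

lemma exists_lattice2_eq_det_eq_abs (g : Matrix (Fin 2) (Fin 2) ℝ) :
    ∃ M : Matrix (Fin 2) (Fin 2) ℝ, lattice2 M = lattice2 g ∧ M.det = |g.det| := by
  rcases le_or_gt 0 g.det with hg | hg
  · exact ⟨g, rfl, (abs_of_nonneg hg).symm⟩
  · refine ⟨g * (!![1, 0; 0, -1] : Matrix (Fin 2) (Fin 2) ℤ).map (Int.castRingHom ℝ),
      lattice2_mul_intCast g (by simp [det_fin_two_of]), ?_⟩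
    rw [det_mul, det_map_intCast, det_fin_two_of, abs_of_neg hg]
    push_cast
    ring

lemma Admissible2.one_le_transpose_mul_self_apply {N : Matrix (Fin 2) (Fin 2) ℝ}
    (hN : Admissible2 unitDisc N) (hdet : N.det ≠ 0) (j : Fin 2) : 1 ≤ (Nᵀ * N) j j := by
  by_contra hlt
  have hcol : (fun i => N i j) ∈ lattice2 N ∩ unitDisc := by
    refine ⟨⟨Pi.single j 1, ?_⟩, ?_⟩
    · ext i
      simp [mulVec, dotProduct, Pi.single_apply]
    · simpa [unitDisc, mul_apply, Fin.sum_univ_two, sq] using hlt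
  rw [hN] at hcol
  exact hdet (det_eq_zero_of_column_eq_zero j fun i => congrFun hcol i)

lemma IsReducedBasis.abs_two_mul_gram_le {N : Matrix (Fin 2) (Fin 2) ℝ}
    (hN : IsReducedBasis N) :
    |2 * (Nᵀ * N) 0 1| ≤ (Nᵀ * N) 0 0 ∧ |2 * (Nᵀ * N) 0 1| ≤ (Nᵀ * N) 1 1 := by
  have h₁ := hN !![1, 1; 0, 1] (by simp [det_fin_two_of])
  have h₂ := hN !![1, -1; 0, 1] (by simp [det_fin_two_of])
  have h₃ := hN !![1, 0; 1, 1] (by simp [det_fin_two_of])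
  have h₄ := hN !![1, 0; -1, 1] (by simp [det_fin_two_of])
  rw [abs_le, abs_le]
  simp only [gramTrace, trace_fin_two, mul_apply, transpose_apply, Fin.sum_univ_two, map_apply,
    of_apply, cons_val', cons_val_zero, cons_val_one, cons_val_fin_one, Int.coe_castRingHom,
    Int.cast_one, Int.cast_zero, Int.cast_neg] at h₁ h₂ h₃ h₄ ⊢
  refine ⟨⟨?_, ?_⟩, ?_, ?_⟩ <;> linarith

lemma det_transpose_mul_self_fin_two (N : Matrix (Fin 2) (Fin 2) ℝ) :
    (Nᵀ * N) 0 0 * (Nᵀ * N) 1 1 - (Nᵀ * N) 0 1 ^ 2 = N.det ^ 2 := by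
  calc _ = (Nᵀ * N).det := by rw [det_fin_two, (isSymm_transpose_mul_self N).apply 0 1, sq]
    _ = N.det ^ 2 := by rw [det_mul, det_transpose, sq]

lemma eq_one_and_abs_eq_half_of_reduced {a b t : ℝ} (ha : 1 ≤ a) (hb : 1 ≤ b)
    (hta : |2 * t| ≤ a) (htb : |2 * t| ≤ b) (hdet : a * b - t ^ 2 = 3 / 4) :
    a = 1 ∧ b = 1 ∧ |t| = 1 / 2 := by
  have h4t : 4 * t ^ 2 ≤ a * b := by
    have := mul_le_mul hta htb (abs_nonneg _) (by linarith)
    rw [abs_mul_abs_self] at this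
    linarith
  have hab : a * b ≤ 1 := by linarith
  have ha1 : a = 1 := by nlinarith
  have hb1 : b = 1 := by nlinarith
  refine ⟨ha1, hb1, (pow_left_inj₀ (abs_nonneg t) (by norm_num) two_ne_zero).1 ?_⟩
  rw [sq_abs]
  subst ha1 hb1
  linarith

lemma hexMat_transpose_mul_self : hexMatᵀ * hexMat = !![1, 1 / 2; 1 / 2, 1] := by
  have h3 : Real.sqrt 3 * Real.sqrt 3 = 3 := Real.mul_self_sqrt (by norm_num)
  ext i j
  fin_cases i <;> fin_cases j <;>
    norm_num [hexMat, mul_apply, Fin.sum_univ_two, div_mul_div_comm, h3]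

lemma det_hexMat : hexMat.det = Real.sqrt 3 / 2 := by
  simp [hexMat, det_fin_two_of]

lemma transpose_mul_self_eq_hexMat {N : Matrix (Fin 2) (Fin 2) ℝ} (h00 : (Nᵀ * N) 0 0 = 1)
    (h11 : (Nᵀ * N) 1 1 = 1) (h01 : (Nᵀ * N) 0 1 = 1 / 2) : Nᵀ * N = hexMatᵀ * hexMat := by
  rw [hexMat_transpose_mul_self, eta_fin_two (Nᵀ * N), h00, h11, h01,
    (isSymm_transpose_mul_self N).apply 0 1, h01]

lemma exists_lattice2_eq_transpose_mul_self_eq_hexMat {N : Matrix (Fin 2) (Fin 2) ℝ}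
    (hdet : N.det = Real.sqrt 3 / 2) (h00 : (Nᵀ * N) 0 0 = 1) (h11 : (Nᵀ * N) 1 1 = 1)
    (h01 : |(Nᵀ * N) 0 1| = 1 / 2) :
    ∃ N' : Matrix (Fin 2) (Fin 2) ℝ, lattice2 N' = lattice2 N ∧
      N'ᵀ * N' = hexMatᵀ * hexMat ∧ N'.det = hexMat.det := by
  rcases (abs_eq (by norm_num)).1 h01 with h | h
  · exact ⟨N, rfl, transpose_mul_self_eq_hexMat h00 h11 h, hdet.trans det_hexMat.symm⟩
  -- an obtuse angle between the basis vectors `u, v`: pass to the basis `u, u + v`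
  let E : Matrix (Fin 2) (Fin 2) ℤ := !![1, 1; 0, 1]
  have h10 := (isSymm_transpose_mul_self N).apply 0 1
  refine ⟨N * E.map (Int.castRingHom ℝ),
    lattice2_mul_intCast N (by simp [E, det_fin_two_of]),
    transpose_mul_self_eq_hexMat ?_ ?_ ?_, ?_⟩
  rotate_right
  · rw [det_mul, det_map_intCast, hdet, det_hexMat]
    simp [E, det_fin_two_of]
  all_goals
    rw [transpose_mul, Matrix.mul_assoc, ← Matrix.mul_assoc Nᵀ]
    generalize Nᵀ * N = G at *
    simp only [E, mul_apply, transpose_apply, Fin.sum_univ_two, map_apply, of_apply, cons_val',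
      cons_val_zero, cons_val_one, cons_val_fin_one, Int.coe_castRingHom, Int.cast_one,
      Int.cast_zero]
    linarith

theorem critical_lattice_of_disc_is_rotated_hexagonal_general (g : Matrix (Fin 2) (Fin 2) ℝ)
    (hadm : Admissible2 unitDisc g)
    (hcov : |g.det| = Real.sqrt 3 / 2) :
    ∃ k : Matrix (Fin 2) (Fin 2) ℝ, k.transpose * k = 1 ∧ k.det = 1 ∧
      lattice2 g = lattice2 (k * hexMat) := by
  obtain ⟨M, hMg, hMdet⟩ := exists_lattice2_eq_det_eq_abs g
  rw [hcov] at hMdet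
  obtain ⟨W, hW, hred⟩ := exists_isReducedBasis M (by simp [hMdet])
  set N := M * W.map (Int.castRingHom ℝ)
  have hNg : lattice2 N = lattice2 g := (lattice2_mul_intCast M (by simp [hW])).trans hMg
  have hNdet : N.det = Real.sqrt 3 / 2 := by
    rw [det_mul, det_map_intCast, hW, hMdet, Int.cast_one, mul_one]
  have hNadm : Admissible2 unitDisc N := by rwa [Admissible2, hNg]
  have hNdet₀ : N.det ≠ 0 := by rw [hNdet]; positivity
  have hgram_det : (Nᵀ * N) 0 0 * (Nᵀ * N) 1 1 - (Nᵀ * N) 0 1 ^ 2 = 3 / 4 := by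
    rw [det_transpose_mul_self_fin_two, hNdet, div_pow, Real.sq_sqrt (by norm_num)]
    norm_num
  obtain ⟨h00, h11, h01⟩ := eq_one_and_abs_eq_half_of_reduced
    (hNadm.one_le_transpose_mul_self_apply hNdet₀ 0)
    (hNadm.one_le_transpose_mul_self_apply hNdet₀ 1)
    hred.abs_two_mul_gram_le.1 hred.abs_two_mul_gram_le.2 hgram_det
  obtain ⟨N', hN', hgram, hdet'⟩ :=
    exists_lattice2_eq_transpose_mul_self_eq_hexMat hNdet h00 h11 h01
  obtain ⟨k, hk, hkdet, rfl⟩ :=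
    exists_specialOrthogonal_mul_eq (by simp [det_hexMat]) hgram hdet'
  exact ⟨k, hk, hkdet, (hN'.trans hNg).symm⟩

/-- Every `D`-critical lattice is a rotation of the hexagonal lattice. -/
theorem critical_lattice_of_disc_is_rotated_hexagonal (g : Matrix (Fin 2) (Fin 2) ℝ)
    (hdet : g.det ≠ 0) (hadm : Admissible2 unitDisc g)
    (hcov : |g.det| = Real.sqrt 3 / 2) :
    ∃ k : Matrix (Fin 2) (Fin 2) ℝ, k.transpose * k = 1 ∧ k.det = 1 ∧
      lattice2 g = lattice2 (k * hexMat) :=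
  critical_lattice_of_disc_is_rotated_hexagonal_general g hadm hcov
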